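/- arXiv:2407.05957 — 6 statements merged into one kernel-verified Lean document; each statement's English description precedes it below -/
import Mathlib

section
/- For every real number x, the wrapped normal kernel satisfies lim_{h → +∞} 𝒦_h(x) = 1/(2π). -/
open Real Filter

/-- The wrapped normal kernel with bandwidth `h`. -/
noncomputable def wrappedNormalKernel (h x : ℝ) : ℝ :=
  (Real.sqrt (2 * π * h ^ 2))⁻¹ *
    ∑' m : ℤ, Real.exp (-(x + 2 * π * m) ^ 2 / (2 * h ^ 2))

lemma summable_exp_neg_mul_int_sq_aux {c : ℝ} (hc : 0 < c) :
    Summable fun n : ℤ => Real.exp (-c * (n : ℝ) ^ 2) := by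
  have hg : Summable fun n : ℕ => Real.exp ((n : ℝ) * -c) :=
    Real.summable_exp_nat_mul_iff.mpr (by linarith)
  have hnat : Summable fun n : ℕ => Real.exp (-c * (n : ℝ) ^ 2) := by
    refine Summable.of_nonneg_of_le (fun n => (Real.exp_pos _).le)
      (fun n => Real.exp_le_exp.mpr ?_) hg
    have h1 : (n : ℝ) ≤ (n : ℝ) ^ 2 := by
      exact_mod_cast Nat.le_self_pow two_ne_zero n
    nlinarith
  apply Summable.of_nat_of_neg
  · simpa using hnat
  · simpa using hnat

lemma wrappedNormalKernel_eq {h : ℝ} (hh : 0 < h) (x : ℝ) :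
    wrappedNormalKernel h x =
      (1 / (2 * π)) * ∑' n : ℤ, Real.exp (-(n : ℝ) ^ 2 * h ^ 2 / 2) * Real.cos (n * x) := by
  have hne : h ≠ 0 := hh.ne'
  have hneC : (h : ℂ) ≠ 0 := by exact_mod_cast hne
  have hπC : (π : ℂ) ≠ 0 := by exact_mod_cast Real.pi_ne_zero
  have ha : (0 : ℝ) < 2 * π / h ^ 2 := by positivity
  have key := Complex.tsum_exp_neg_quadratic
    (a := ((2 * π / h ^ 2 : ℝ) : ℂ)) (by rwa [Complex.ofReal_re]) ((-x / h ^ 2 : ℝ) : ℂ)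
  -- rewrite LHS termwise
  have hterm1 : ∀ m : ℤ,
      Complex.exp (-(π : ℂ) * ((2 * π / h ^ 2 : ℝ) : ℂ) * (m : ℂ) ^ 2 +
        2 * (π : ℂ) * ((-x / h ^ 2 : ℝ) : ℂ) * (m : ℂ)) =
      ((Real.exp (x ^ 2 / (2 * h ^ 2)) : ℝ) : ℂ) *
        ((Real.exp (-(x + 2 * π * m) ^ 2 / (2 * h ^ 2)) : ℝ) : ℂ) := by
    intro m
    have he : (-(π : ℂ) * ((2 * π / h ^ 2 : ℝ) : ℂ) * (m : ℂ) ^ 2 +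
        2 * (π : ℂ) * ((-x / h ^ 2 : ℝ) : ℂ) * (m : ℂ)) =
        ((x ^ 2 / (2 * h ^ 2) : ℝ) : ℂ) + ((-(x + 2 * π * m) ^ 2 / (2 * h ^ 2) : ℝ) : ℂ) := by
      push_cast
      field_simp
      ring
    rw [he, Complex.exp_add, Complex.ofReal_exp, Complex.ofReal_exp]
  -- rewrite RHS termwise
  have hterm2 : ∀ n : ℤ,
      Complex.exp (-(π : ℂ) / ((2 * π / h ^ 2 : ℝ) : ℂ) *
        ((n : ℂ) + Complex.I * ((-x / h ^ 2 : ℝ) : ℂ)) ^ 2) =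
      ((Real.exp (x ^ 2 / (2 * h ^ 2)) : ℝ) : ℂ) *
        (((Real.exp (-(n : ℝ) ^ 2 * h ^ 2 / 2) : ℝ) : ℂ) *
          Complex.exp ((((n : ℝ) * x : ℝ) : ℂ) * Complex.I)) := by
    intro n
    have hz : ((n : ℂ) + Complex.I * ((-x / h ^ 2 : ℝ) : ℂ)) ^ 2 =
        (((n : ℝ) ^ 2 - (-x / h ^ 2) ^ 2 : ℝ) : ℂ) +
          ((2 * (-x / h ^ 2) * n : ℝ) : ℂ) * Complex.I := by
      push_cast
      linear_combination ((x : ℂ) / (h : ℂ) ^ 2) ^ 2 * Complex.I_sq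
    have he : (-(π : ℂ) / ((2 * π / h ^ 2 : ℝ) : ℂ) *
        ((n : ℂ) + Complex.I * ((-x / h ^ 2 : ℝ) : ℂ)) ^ 2) =
        ((x ^ 2 / (2 * h ^ 2) : ℝ) : ℂ) + ((-(n : ℝ) ^ 2 * h ^ 2 / 2 : ℝ) : ℂ) +
          (((n : ℝ) * x : ℝ) : ℂ) * Complex.I := by
      rw [hz]
      push_cast
      field_simp
      ring
    rw [he, Complex.exp_add, Complex.exp_add, Complex.ofReal_exp, Complex.ofReal_exp]
    ring
  have hL : (∑' m : ℤ, Complex.exp (-(π : ℂ) * ((2 * π / h ^ 2 : ℝ) : ℂ) * (m : ℂ) ^ 2 +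
        2 * (π : ℂ) * ((-x / h ^ 2 : ℝ) : ℂ) * (m : ℂ))) =
      ((Real.exp (x ^ 2 / (2 * h ^ 2)) : ℝ) : ℂ) *
        ((∑' m : ℤ, Real.exp (-(x + 2 * π * m) ^ 2 / (2 * h ^ 2)) : ℝ) : ℂ) := by
    rw [Complex.ofReal_tsum, ← tsum_mul_left]
    exact tsum_congr hterm1
  have hR : (∑' n : ℤ, Complex.exp (-(π : ℂ) / ((2 * π / h ^ 2 : ℝ) : ℂ) *
        ((n : ℂ) + Complex.I * ((-x / h ^ 2 : ℝ) : ℂ)) ^ 2)) =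
      ((Real.exp (x ^ 2 / (2 * h ^ 2)) : ℝ) : ℂ) *
        ∑' n : ℤ, (((Real.exp (-(n : ℝ) ^ 2 * h ^ 2 / 2) : ℝ) : ℂ) *
          Complex.exp ((((n : ℝ) * x : ℝ) : ℂ) * Complex.I)) := by
    rw [← tsum_mul_left]
    exact tsum_congr hterm2
  have hpow : ((2 * π / h ^ 2 : ℝ) : ℂ) ^ (1 / 2 : ℂ) = ((Real.sqrt (2 * π) / h : ℝ) : ℂ) := by
    have h12 : ((1 / 2 : ℝ) : ℂ) = (1 / 2 : ℂ) := by push_cast; ring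
    rw [← h12, ← Complex.ofReal_cpow ha.le]
    congr 1
    rw [← Real.sqrt_eq_rpow, Real.sqrt_div (by positivity) (h ^ 2), Real.sqrt_sq hh.le]
  rw [hL, hR, hpow] at key
  have hE : ((Real.exp (x ^ 2 / (2 * h ^ 2)) : ℝ) : ℂ) ≠ 0 := by
    exact_mod_cast (Real.exp_pos _).ne'
  have key2 : ((∑' m : ℤ, Real.exp (-(x + 2 * π * m) ^ 2 / (2 * h ^ 2)) : ℝ) : ℂ) =
      ((h / Real.sqrt (2 * π) : ℝ) : ℂ) *
        ∑' n : ℤ, (((Real.exp (-(n : ℝ) ^ 2 * h ^ 2 / 2) : ℝ) : ℂ) *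
          Complex.exp ((((n : ℝ) * x : ℝ) : ℂ) * Complex.I)) := by
    rw [show ((h / Real.sqrt (2 * π) : ℝ) : ℂ) = 1 / ((Real.sqrt (2 * π) / h : ℝ) : ℂ) by
      rw [one_div, ← Complex.ofReal_inv]; congr 1; rw [inv_div]]
    apply mul_left_cancel₀ hE
    rw [key]
    ring
  have hsummT : Summable (fun n : ℤ => ((Real.exp (-(n : ℝ) ^ 2 * h ^ 2 / 2) : ℝ) : ℂ) *
      Complex.exp ((((n : ℝ) * x : ℝ) : ℂ) * Complex.I)) := by
    apply Summable.of_norm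
    have hc2 : (0 : ℝ) < h ^ 2 / 2 := by positivity
    apply Summable.congr (summable_exp_neg_mul_int_sq_aux hc2)
    intro n
    rw [norm_mul, Complex.norm_real, Real.norm_eq_abs,
      Complex.norm_exp_ofReal_mul_I, mul_one, abs_of_pos (Real.exp_pos _)]
    ring_nf
  have hS := congrArg Complex.re key2
  rw [Complex.ofReal_re, Complex.re_ofReal_mul, Complex.re_tsum hsummT] at hS
  simp only [Complex.re_ofReal_mul, Complex.exp_ofReal_mul_I_re] at hS
  have hsqrt : Real.sqrt (2 * π * h ^ 2) = Real.sqrt (2 * π) * h := by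
    rw [Real.sqrt_mul (by positivity), Real.sqrt_sq hh.le]
  have hfac : (Real.sqrt (2 * π) * h)⁻¹ * (h / Real.sqrt (2 * π)) = 1 / (2 * π) := by
    have h2π : Real.sqrt (2 * π) * Real.sqrt (2 * π) = 2 * π :=
      Real.mul_self_sqrt (by positivity)
    have step : (Real.sqrt (2 * π) * h)⁻¹ * (h / Real.sqrt (2 * π)) =
        (h⁻¹ * h) * (Real.sqrt (2 * π) * Real.sqrt (2 * π))⁻¹ := by ring
    rw [step, inv_mul_cancel₀ hne, one_mul, h2π, one_div]
  rw [wrappedNormalKernel, hsqrt, hS, ← mul_assoc, hfac]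

/-- For every real `x`, `𝒦_h(x) → 1/(2π)` as `h → +∞`. -/
theorem tendsto_wrappedNormalKernel_atTop (x : ℝ) :
    Tendsto (fun h : ℝ => wrappedNormalKernel h x) atTop (nhds (1 / (2 * π))) := by
  have hc2 : Summable fun n : ℤ => Real.exp (-(1 / 2 : ℝ) * (n : ℝ) ^ 2) :=
    summable_exp_neg_mul_int_sq_aux (by norm_num)
  set C : ℝ := ∑' n : ℤ, Real.exp (-(1 / 2 : ℝ) * (n : ℝ) ^ 2) with hCdef
  set R : ℝ → ℝ := fun h =>
    ∑' n : ℤ, (if n = 0 then 0 else Real.exp (-(n : ℝ) ^ 2 * h ^ 2 / 2) * Real.cos (n * x))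
    with hRdef
  have hmain : ∀ᶠ h : ℝ in atTop,
      wrappedNormalKernel h x = (1 / (2 * π)) * (1 + R h) := by
    filter_upwards [eventually_gt_atTop 0] with h hh
    rw [wrappedNormalKernel_eq hh x]
    congr 1
    have hsf : Summable fun n : ℤ => Real.exp (-(n : ℝ) ^ 2 * h ^ 2 / 2) * Real.cos (n * x) := by
      refine Summable.of_norm_bounded
        (summable_exp_neg_mul_int_sq_aux (c := h ^ 2 / 2) (by positivity)) fun n => ?_
      rw [Real.norm_eq_abs, abs_mul, Real.abs_exp]
      calc Real.exp (-(n : ℝ) ^ 2 * h ^ 2 / 2) * |Real.cos (n * x)|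
          ≤ Real.exp (-(n : ℝ) ^ 2 * h ^ 2 / 2) * 1 :=
            mul_le_mul_of_nonneg_left (abs_cos_le_one _) (Real.exp_pos _).le
        _ = Real.exp (-(h ^ 2 / 2) * (n : ℝ) ^ 2) := by rw [mul_one]; ring_nf
    have h0 : Real.exp (-((0 : ℤ) : ℝ) ^ 2 * h ^ 2 / 2) * Real.cos (((0 : ℤ) : ℝ) * x) = 1 := by
      norm_num
    rw [Summable.tsum_eq_add_tsum_ite hsf 0, h0]
  have hbound : ∀ᶠ h : ℝ in atTop, ‖R h‖ ≤ Real.exp ((1 - h ^ 2) / 2) * C := by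
    filter_upwards [eventually_ge_atTop 1] with h hh
    have hb : ∀ n : ℤ,
        ‖if n = 0 then 0 else Real.exp (-(n : ℝ) ^ 2 * h ^ 2 / 2) * Real.cos (n * x)‖ ≤
          Real.exp ((1 - h ^ 2) / 2) * Real.exp (-(1 / 2 : ℝ) * (n : ℝ) ^ 2) := by
      intro n
      by_cases hn : n = 0
      · simp only [hn, if_pos, norm_zero]
        positivity
      · rw [if_neg hn, Real.norm_eq_abs, abs_mul, Real.abs_exp]
        have hn1 : (1 : ℝ) ≤ (n : ℝ) ^ 2 := by
          have h' : (1 : ℤ) ≤ n ^ 2 := by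
            nlinarith [Int.one_le_abs (show n ≠ 0 from hn), sq_abs n, abs_nonneg n]
          exact_mod_cast h'
        have hh2 : (1 : ℝ) ≤ h ^ 2 := by nlinarith
        calc Real.exp (-(n : ℝ) ^ 2 * h ^ 2 / 2) * |Real.cos (n * x)|
            ≤ Real.exp (-(n : ℝ) ^ 2 * h ^ 2 / 2) * 1 :=
              mul_le_mul_of_nonneg_left (abs_cos_le_one _) (Real.exp_pos _).le
          _ = Real.exp (-(n : ℝ) ^ 2 * h ^ 2 / 2) := mul_one _
          _ ≤ Real.exp ((1 - h ^ 2) / 2) * Real.exp (-(1 / 2 : ℝ) * (n : ℝ) ^ 2) := by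
              rw [← Real.exp_add, Real.exp_le_exp]
              nlinarith [mul_nonneg (sub_nonneg.mpr hn1) (sub_nonneg.mpr hh2)]
    have hsb : Summable fun n : ℤ =>
        Real.exp ((1 - h ^ 2) / 2) * Real.exp (-(1 / 2 : ℝ) * (n : ℝ) ^ 2) := hc2.mul_left _
    have hsnorm : Summable fun n : ℤ =>
        ‖if n = 0 then 0 else Real.exp (-(n : ℝ) ^ 2 * h ^ 2 / 2) * Real.cos (n * x)‖ :=
      hsb.of_nonneg_of_le (fun n => norm_nonneg _) hb
    calc ‖R h‖ ≤ ∑' n : ℤ,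
          ‖if n = 0 then 0 else Real.exp (-(n : ℝ) ^ 2 * h ^ 2 / 2) * Real.cos (n * x)‖ :=
        norm_tsum_le_tsum_norm hsnorm
      _ ≤ ∑' n : ℤ, Real.exp ((1 - h ^ 2) / 2) * Real.exp (-(1 / 2 : ℝ) * (n : ℝ) ^ 2) :=
        hsnorm.tsum_le_tsum hb hsb
      _ = Real.exp ((1 - h ^ 2) / 2) * C := tsum_mul_left
  have htend0 : Tendsto (fun h : ℝ => Real.exp ((1 - h ^ 2) / 2) * C) atTop (nhds 0) := by
    rw [show (0 : ℝ) = 0 * C from (zero_mul C).symm]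
    apply Tendsto.mul_const
    apply Real.tendsto_exp_atBot.comp
    apply Tendsto.atBot_div_const (by norm_num : (0 : ℝ) < 2)
    have h1 : Tendsto (fun h : ℝ => -(h ^ 2)) atTop atBot :=
      tendsto_neg_atTop_atBot.comp (tendsto_pow_atTop two_ne_zero)
    have := tendsto_atBot_add_const_left atTop (1 : ℝ) h1
    simpa [sub_eq_add_neg] using this
  have hR0 : Tendsto R atTop (nhds 0) := squeeze_zero_norm' hbound htend0
  have hlim : Tendsto (fun h : ℝ => (1 / (2 * π)) * (1 + R h)) atTop (nhds (1 / (2 * π))) := by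
    have := (tendsto_const_nhds.add hR0).const_mul (1 / (2 * π))
      (f := fun h : ℝ => 1 + R h)
    simpa using this
  exact hlim.congr' (EventuallyEq.symm hmain)
end

section
/- For every x ∈ ℝ with x ≤ 2π and every h > 0, the partial series over negative shifts satisfies the bound ∑_{m = 1}^{∞} exp(−(x − 2πm)² / (2h²)) ≤ exp(−(2π − x)² / (2h²)) · (1 − exp(−2π² / h²))^{−1}. -/
open Real

/-- For every `x ≤ 2π` and every `h > 0`, the series over negative shifts satisfies
`∑_{m=1}^{∞} exp(−(x − 2πm)²/(2h²)) ≤ exp(−(2π − x)²/(2h²)) · (1 − exp(−2π²/h²))⁻¹`. -/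
theorem sum_neg_shifts_le (x : ℝ) (hx : x ≤ 2 * π) (h : ℝ) (hh : 0 < h) :
    ∑' m : ℕ, Real.exp (-(x - 2 * π * (m + 1)) ^ 2 / (2 * h ^ 2)) ≤
      Real.exp (-(2 * π - x) ^ 2 / (2 * h ^ 2)) * (1 - Real.exp (-(2 * π ^ 2) / h ^ 2))⁻¹ := by
  set r : ℝ := Real.exp (-(2 * π ^ 2) / h ^ 2) with hr
  have h2 : (0:ℝ) < h ^ 2 := by positivity
  have hrlt : r < 1 := by
    rw [hr, Real.exp_lt_one_iff]
    have : (0:ℝ) < 2 * π ^ 2 := by positivity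
    rw [neg_div]
    linarith [div_pos this h2]
  have hrpos : (0:ℝ) < r := Real.exp_pos _
  have key : ∀ m : ℕ, Real.exp (-(x - 2 * π * (m + 1)) ^ 2 / (2 * h ^ 2)) ≤
      Real.exp (-(2 * π - x) ^ 2 / (2 * h ^ 2)) * r ^ m := by
    intro m
    rw [hr, ← Real.exp_nat_mul, ← Real.exp_add, Real.exp_le_exp]
    have hm : (1:ℝ) ≤ (m:ℝ) ∨ (m:ℝ) = 0 := by
      rcases Nat.eq_zero_or_pos m with h0 | h1
      · right; exact_mod_cast h0
      · left; exact_mod_cast h1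
    have hmsq : (m:ℝ) ≤ (m:ℝ) ^ 2 := by
      rcases hm with h1 | h0
      · nlinarith
      · simp [h0]
    have hbound : (2 * π - x) ^ 2 + 4 * π ^ 2 * m ≤ (x - 2 * π * (m + 1)) ^ 2 := by
      have hπ := Real.pi_pos
      have hb : (0:ℝ) ≤ 2 * π * m := by positivity
      nlinarith [sq_nonneg (2 * π * (m:ℝ)), mul_nonneg (sub_nonneg.2 hx) hb]
    have h2' : (0:ℝ) < 2 * h ^ 2 := by positivity
    have hc : (↑m:ℝ) * (-(2 * π ^ 2) / h ^ 2) = -(4 * π ^ 2 * m) / (2 * h ^ 2) := by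
      field_simp; ring
    rw [hc, ← add_div, div_le_div_iff_of_pos_right h2']
    linarith [hbound]
  have hsum_geo : Summable (fun m : ℕ => Real.exp (-(2 * π - x) ^ 2 / (2 * h ^ 2)) * r ^ m) :=
    (summable_geometric_of_lt_one hrpos.le hrlt).mul_left _
  have hsum : Summable (fun m : ℕ => Real.exp (-(x - 2 * π * (m + 1)) ^ 2 / (2 * h ^ 2))) :=
    Summable.of_nonneg_of_le (fun m => (Real.exp_pos _).le) key hsum_geo
  calc ∑' m : ℕ, Real.exp (-(x - 2 * π * (m + 1)) ^ 2 / (2 * h ^ 2))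
      ≤ ∑' m : ℕ, Real.exp (-(2 * π - x) ^ 2 / (2 * h ^ 2)) * r ^ m :=
        Summable.tsum_le_tsum key hsum hsum_geo
    _ = Real.exp (-(2 * π - x) ^ 2 / (2 * h ^ 2)) * (1 - r)⁻¹ := by
        rw [tsum_mul_left, tsum_geometric_of_lt_one hrpos.le hrlt]
end

section
/- For every x ∈ [0, 2π] and every h > 0, the wrapped normal kernel satisfies the bound 𝒦_h(x) ≤ (1 − exp(−2π²/h²))^{−1} · [ (2πh²)^{−1/2} exp(−(2π − x)²/(2h²)) + (2πh²)^{−1/2} exp(−x²/(2h²)) ]. -/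
open Real

lemma wnk_key (h : ℝ) (hh : 0 < h) (y : ℝ) (hy : 0 ≤ y) (n : ℕ) :
    Real.exp (-(y + 2 * π * n) ^ 2 / (2 * h ^ 2)) ≤
      Real.exp (-y ^ 2 / (2 * h ^ 2)) * Real.exp (-(2 * π ^ 2) / h ^ 2) ^ n := by
  rw [← Real.exp_nat_mul, ← Real.exp_add, Real.exp_le_exp]
  have hrw : (n : ℝ) * (-(2 * π ^ 2) / h ^ 2) = (n : ℝ) * (-(4 * π ^ 2)) / (2 * h ^ 2) := by
    field_simp; ring
  rw [hrw, ← add_div, div_le_div_iff₀ (by positivity) (by positivity)]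
  have hn : (n : ℝ) ≤ (n : ℝ) ^ 2 := by
    rcases Nat.eq_zero_or_pos n with h0 | h0
    · simp [h0]
    · have : (1:ℝ) ≤ n := by exact_mod_cast h0
      nlinarith
  have key : y ^ 2 + (n:ℝ) * (4 * π ^ 2) ≤ (y + 2 * π * n) ^ 2 := by
    nlinarith [Real.pi_pos, mul_nonneg hy (Nat.cast_nonneg n : (0:ℝ) ≤ n), sq_nonneg π]
  nlinarith [key, mul_pos two_pos (pow_pos hh 2)]

/-- For `x ∈ [0, 2π]` and `h > 0`,
`𝒦_h(x) ≤ (1 − e^{−2π²/h²})⁻¹ [ (2πh²)^{−1/2} e^{−(2π−x)²/(2h²)} + (2πh²)^{−1/2} e^{−x²/(2h²)} ]`. -/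
theorem wrappedNormalKernel_le (x : ℝ) (hx : x ∈ Set.Icc (0 : ℝ) (2 * π))
    (h : ℝ) (hh : 0 < h) :
    wrappedNormalKernel h x ≤
      (1 - Real.exp (-(2 * π ^ 2) / h ^ 2))⁻¹ *
        ((Real.sqrt (2 * π * h ^ 2))⁻¹ * Real.exp (-(2 * π - x) ^ 2 / (2 * h ^ 2)) +
          (Real.sqrt (2 * π * h ^ 2))⁻¹ * Real.exp (-x ^ 2 / (2 * h ^ 2))) := by
  obtain ⟨hx0, hx2⟩ := hx
  set q : ℝ := Real.exp (-(2 * π ^ 2) / h ^ 2) with hqdef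
  have hq0 : 0 < q := Real.exp_pos _
  have hq1 : q < 1 := by
    rw [hqdef, Real.exp_lt_one_iff]
    have := Real.pi_pos
    have : (0:ℝ) < 2 * π ^ 2 := by positivity
    rw [div_neg_iff]
    right
    constructor <;> [linarith; positivity]
  have hy0 : (0:ℝ) ≤ 2 * π - x := by linarith
  set f : ℤ → ℝ := fun m => Real.exp (-(x + 2 * π * m) ^ 2 / (2 * h ^ 2)) with hfdef
  have hgeom : Summable fun n : ℕ => q ^ n := summable_geometric_of_lt_one hq0.le hq1
  have hfnat : ∀ n : ℕ, f n = Real.exp (-(x + 2 * π * n) ^ 2 / (2 * h ^ 2)) := by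
    intro n; simp [hfdef]
  have hfneg : ∀ n : ℕ, f (-(n + 1)) =
      Real.exp (-((2 * π - x) + 2 * π * n) ^ 2 / (2 * h ^ 2)) := by
    intro n
    simp only [hfdef]
    congr 1
    push_cast
    ring
  have hbound1 : ∀ n : ℕ, f n ≤ Real.exp (-x ^ 2 / (2 * h ^ 2)) * q ^ n := by
    intro n; rw [hfnat]; exact wnk_key h hh x hx0 n
  have hbound2 : ∀ n : ℕ, f (-(n + 1)) ≤ Real.exp (-(2 * π - x) ^ 2 / (2 * h ^ 2)) * q ^ n := by
    intro n; rw [hfneg]; exact wnk_key h hh (2 * π - x) hy0 n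
  have hs1 : Summable fun n : ℕ => f n :=
    Summable.of_nonneg_of_le (fun n => (Real.exp_pos _).le) hbound1 (hgeom.mul_left _)
  have hs2 : Summable fun n : ℕ => f (-(n + 1)) :=
    Summable.of_nonneg_of_le (fun n => (Real.exp_pos _).le) hbound2 (hgeom.mul_left _)
  have htsum : (∑' m : ℤ, f m) = (∑' n : ℕ, f n) + ∑' n : ℕ, f (-(n + 1)) :=
    tsum_of_nat_of_neg_add_one hs1 hs2
  have hgsum : (∑' n : ℕ, q ^ n) = (1 - q)⁻¹ := tsum_geometric_of_lt_one hq0.le hq1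
  have h1 : (∑' n : ℕ, f n) ≤ Real.exp (-x ^ 2 / (2 * h ^ 2)) * (1 - q)⁻¹ := by
    calc (∑' n : ℕ, f n) ≤ ∑' n : ℕ, Real.exp (-x ^ 2 / (2 * h ^ 2)) * q ^ n :=
          Summable.tsum_le_tsum hbound1 hs1 (hgeom.mul_left _)
      _ = Real.exp (-x ^ 2 / (2 * h ^ 2)) * (1 - q)⁻¹ := by rw [tsum_mul_left, hgsum]
  have h2 : (∑' n : ℕ, f (-(n + 1))) ≤
      Real.exp (-(2 * π - x) ^ 2 / (2 * h ^ 2)) * (1 - q)⁻¹ := by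
    calc (∑' n : ℕ, f (-(n + 1)))
        ≤ ∑' n : ℕ, Real.exp (-(2 * π - x) ^ 2 / (2 * h ^ 2)) * q ^ n :=
          Summable.tsum_le_tsum hbound2 hs2 (hgeom.mul_left _)
      _ = _ := by rw [tsum_mul_left, hgsum]
  have hC : (0:ℝ) ≤ (Real.sqrt (2 * π * h ^ 2))⁻¹ := by positivity
  have : (∑' m : ℤ, f m) ≤
      (Real.exp (-(2 * π - x) ^ 2 / (2 * h ^ 2)) + Real.exp (-x ^ 2 / (2 * h ^ 2))) * (1 - q)⁻¹ := by
    rw [htsum]; linarith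
  calc wrappedNormalKernel h x
      = (Real.sqrt (2 * π * h ^ 2))⁻¹ * ∑' m : ℤ, f m := rfl
    _ ≤ (Real.sqrt (2 * π * h ^ 2))⁻¹ *
        ((Real.exp (-(2 * π - x) ^ 2 / (2 * h ^ 2)) + Real.exp (-x ^ 2 / (2 * h ^ 2))) * (1 - q)⁻¹) :=
          mul_le_mul_of_nonneg_left this hC
    _ = (1 - q)⁻¹ *
        ((Real.sqrt (2 * π * h ^ 2))⁻¹ * Real.exp (-(2 * π - x) ^ 2 / (2 * h ^ 2)) +
          (Real.sqrt (2 * π * h ^ 2))⁻¹ * Real.exp (-x ^ 2 / (2 * h ^ 2))) := by ring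
end

section
/- For any points x₁, …, xₙ ∈ (0, 2π] with n ≥ 2, the cross-validation pseudo-likelihood based on the wrapped normal kernel satisfies lim_{h → +∞} ℒ_CV(h) = (2π)^{−n}. -/
open Real Filter

/-- The leave-one-out kernel density estimator `f̂_h^{−i}`. -/
noncomputable def looEstimator {n : ℕ} (X : Fin n → ℝ) (i : Fin n) (h x : ℝ) : ℝ :=
  ((n : ℝ) - 1)⁻¹ * ∑ m ∈ Finset.univ.erase i, wrappedNormalKernel h (x - X m)

/-- The cross-validation pseudo-likelihood `ℒ_CV`. -/
noncomputable def pseudoLikelihoodCV {n : ℕ} (X : Fin n → ℝ) (h : ℝ) : ℝ :=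
  ∏ i : Fin n, looEstimator X i h (X i)

lemma summable_gauss_int {c : ℝ} (hc : 0 < c) : Summable fun n : ℤ => rexp (-c * (n : ℝ) ^ 2) := by
  have hnat : Summable fun n : ℕ => rexp (-c * (n : ℝ) ^ 2) := by
    refine Summable.of_nonneg_of_le (fun n => (Real.exp_pos _).le) (fun n => ?_)
      (summable_geometric_of_lt_one (Real.exp_pos (-c)).le (Real.exp_lt_one_iff.2 (by linarith)))
    rw [← Real.exp_nat_mul]
    apply Real.exp_le_exp.2
    have h1 : (n : ℝ) ≤ (n : ℝ) ^ 2 := by exact_mod_cast Nat.le_self_pow two_ne_zero n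
    nlinarith
  apply Summable.of_nat_of_neg <;> simpa using hnat


lemma kernel_eq {h : ℝ} (hh : 0 < h) (x : ℝ) :
    wrappedNormalKernel h x
      = (2 * π)⁻¹ * ∑' n : ℤ, rexp (-(h ^ 2 * (n : ℝ) ^ 2) / 2) * Real.cos (x * n) := by
  have hh2 : (0:ℝ) < h ^ 2 := by positivity
  have hhC : ((h : ℂ)) ^ 2 ≠ 0 := pow_ne_zero 2 (by exact_mod_cast hh.ne')
  have hπC : ((π : ℂ)) ≠ 0 := by exact_mod_cast Real.pi_ne_zero
  set a : ℝ := 2 * π / h ^ 2 with ha_def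
  set b : ℝ := -x / h ^ 2 with hb_def
  have ha : 0 < a := by positivity
  have haC : ((a : ℂ)) = 2 * (π : ℂ) / (h : ℂ) ^ 2 := by rw [ha_def]; push_cast; ring
  have hbC : ((b : ℂ)) = -(x : ℂ) / (h : ℂ) ^ 2 := by rw [hb_def]; push_cast; ring
  have key := Complex.tsum_exp_neg_quadratic (a := (a : ℂ)) (by simpa using ha) (b : ℂ)
  -- LHS terms
  have hterm : ∀ m : ℤ, ((rexp (-(x + 2 * π * m) ^ 2 / (2 * h ^ 2)) : ℝ) : ℂ)
      = Complex.exp ((( -x ^ 2 / (2 * h ^ 2) : ℝ)) : ℂ)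
        * Complex.exp (-↑π * ↑a * (m : ℂ) ^ 2 + 2 * ↑π * ↑b * (m : ℂ)) := by
    intro m
    rw [Complex.ofReal_exp, ← Complex.exp_add]
    congr 1
    rw [haC, hbC]
    push_cast
    field_simp
    ring
  -- RHS terms
  have hrterm : ∀ n : ℤ, Complex.exp (-↑π / ↑a * ((n : ℂ) + Complex.I * ↑b) ^ 2)
      = Complex.exp (((x ^ 2 / (2 * h ^ 2) : ℝ)) : ℂ)
        * (((rexp (-(h ^ 2 * (n:ℝ) ^ 2) / 2) : ℝ) : ℂ) * Complex.exp (((x * n : ℝ) : ℂ) * Complex.I)) := by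
    intro n
    rw [Complex.ofReal_exp, ← Complex.exp_add, ← Complex.exp_add]
    congr 1
    rw [haC, hbC]
    push_cast
    field_simp
    ring_nf
    rw [Complex.I_sq]
    have e : (h : ℂ) ^ 2 * (h : ℂ)⁻¹ ^ 2 = 1 := by
      rw [← mul_pow, mul_inv_cancel₀ (by exact_mod_cast hh.ne' : (h : ℂ) ≠ 0), one_pow]
    linear_combination (2 * (n : ℂ) * Complex.I * (x : ℂ) + (x : ℂ) ^ 2 * (h : ℂ)⁻¹ ^ 2) * e
  -- summability of the theta-like series
  have hsummB : Summable (fun n : ℤ =>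
      (((rexp (-(h ^ 2 * (n:ℝ) ^ 2) / 2) : ℝ) : ℂ) * Complex.exp (((x * n : ℝ) : ℂ) * Complex.I))) := by
    apply Summable.of_norm
    have : ∀ n : ℤ, ‖(((rexp (-(h ^ 2 * (n:ℝ) ^ 2) / 2) : ℝ) : ℂ) * Complex.exp (((x * n : ℝ) : ℂ) * Complex.I))‖
        = rexp (-(h ^ 2 / 2) * (n:ℝ) ^ 2) := by
      intro n
      rw [norm_mul, Complex.norm_exp_ofReal_mul_I, mul_one, Complex.norm_real,
        Real.norm_eq_abs, abs_of_pos (Real.exp_pos _)]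
      congr 1; ring
    rw [funext this]
    exact summable_gauss_int (by positivity)
  -- main complex identity
  have main : ((∑' m : ℤ, rexp (-(x + 2 * π * m) ^ 2 / (2 * h ^ 2)) : ℝ) : ℂ)
      = (Complex.ofReal ((a ^ ((1:ℝ)/2))⁻¹)) *
        ∑' n : ℤ, (((rexp (-(h ^ 2 * (n:ℝ) ^ 2) / 2) : ℝ) : ℂ) * Complex.exp (((x * n : ℝ) : ℂ) * Complex.I)) := by
    have e1 : ((∑' m : ℤ, rexp (-(x + 2 * π * m) ^ 2 / (2 * h ^ 2)) : ℝ) : ℂ)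
        = ∑' m : ℤ, ((rexp (-(x + 2 * π * m) ^ 2 / (2 * h ^ 2)) : ℝ) : ℂ) := by
      exact_mod_cast Complex.ofReal_tsum _
    rw [e1]
    calc (∑' m : ℤ, ((rexp (-(x + 2 * π * m) ^ 2 / (2 * h ^ 2)) : ℝ) : ℂ))
        = ∑' m : ℤ, Complex.exp ((( -x ^ 2 / (2 * h ^ 2) : ℝ)) : ℂ)
            * Complex.exp (-↑π * ↑a * (m : ℂ) ^ 2 + 2 * ↑π * ↑b * (m : ℂ)) := by
          exact tsum_congr hterm
      _ = Complex.exp ((( -x ^ 2 / (2 * h ^ 2) : ℝ)) : ℂ)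
            * ∑' m : ℤ, Complex.exp (-↑π * ↑a * (m : ℂ) ^ 2 + 2 * ↑π * ↑b * (m : ℂ)) := tsum_mul_left
      _ = Complex.exp ((( -x ^ 2 / (2 * h ^ 2) : ℝ)) : ℂ)
            * (1 / (a:ℂ) ^ ((1:ℂ)/2) * ∑' n : ℤ, Complex.exp (-↑π / ↑a * ((n : ℂ) + Complex.I * ↑b) ^ 2)) := by
          rw [key]
      _ = Complex.exp ((( -x ^ 2 / (2 * h ^ 2) : ℝ)) : ℂ)
            * (1 / (a:ℂ) ^ ((1:ℂ)/2) * ∑' n : ℤ, Complex.exp (((x ^ 2 / (2 * h ^ 2) : ℝ)) : ℂ)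
              * (((rexp (-(h ^ 2 * (n:ℝ) ^ 2) / 2) : ℝ) : ℂ) * Complex.exp (((x * n : ℝ) : ℂ) * Complex.I))) := by
          rw [tsum_congr hrterm]
      _ = (Complex.exp ((( -x ^ 2 / (2 * h ^ 2) : ℝ)) : ℂ) * Complex.exp (((x ^ 2 / (2 * h ^ 2) : ℝ)) : ℂ))
            * (1 / (a:ℂ) ^ ((1:ℂ)/2))
            * ∑' n : ℤ, (((rexp (-(h ^ 2 * (n:ℝ) ^ 2) / 2) : ℝ) : ℂ) * Complex.exp (((x * n : ℝ) : ℂ) * Complex.I)) := by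
          rw [tsum_mul_left]; ring
      _ = (Complex.ofReal ((a ^ ((1:ℝ)/2))⁻¹)) *
            ∑' n : ℤ, (((rexp (-(h ^ 2 * (n:ℝ) ^ 2) / 2) : ℝ) : ℂ) * Complex.exp (((x * n : ℝ) : ℂ) * Complex.I)) := by
          rw [← Complex.exp_add]
          have h0 : (( -x ^ 2 / (2 * h ^ 2) : ℝ) : ℂ) + ((x ^ 2 / (2 * h ^ 2) : ℝ) : ℂ) = 0 := by
            push_cast; ring
          rw [h0, Complex.exp_zero, one_mul]
          congr 1
          rw [Complex.ofReal_inv, Complex.ofReal_cpow ha.le, one_div]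
          norm_num
  -- take real parts
  have hre : (∑' m : ℤ, rexp (-(x + 2 * π * m) ^ 2 / (2 * h ^ 2)))
      = (a ^ ((1:ℝ)/2))⁻¹ * ∑' n : ℤ, rexp (-(h ^ 2 * (n : ℝ) ^ 2) / 2) * Real.cos (x * n) := by
    have := congrArg Complex.re main
    rw [Complex.ofReal_re] at this
    rw [this, Complex.re_ofReal_mul, Complex.re_tsum hsummB]
    congr 1
    apply tsum_congr
    intro n
    rw [Complex.re_ofReal_mul, Complex.exp_ofReal_mul_I_re]
  rw [wrappedNormalKernel, hre, ← mul_assoc]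
  congr 1
  rw [← Real.sqrt_eq_rpow, ← mul_inv, ← Real.sqrt_mul (by positivity : (0:ℝ) ≤ 2 * π * h ^ 2)]
  have h4 : 2 * π * h ^ 2 * a = (2 * π) ^ 2 := by
    rw [ha_def]; field_simp
  rw [h4, Real.sqrt_sq (by positivity)]

lemma S_tendsto (x : ℝ) :
    Tendsto (fun h : ℝ => ∑' n : ℤ, rexp (-(h ^ 2 * (n : ℝ) ^ 2) / 2) * Real.cos (x * n))
      atTop (nhds 1) := by
  set C : ℝ := ∑' n : ℤ, rexp ((1 - (n : ℝ) ^ 2) / 2) with hC_def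
  have hCsumm : Summable fun n : ℤ => rexp ((1 - (n : ℝ) ^ 2) / 2) := by
    have : ∀ n : ℤ, rexp ((1 - (n : ℝ) ^ 2) / 2) = rexp (1/2) * rexp (-(1/2) * (n:ℝ)^2) := by
      intro n; rw [← Real.exp_add]; ring_nf
    rw [funext this]
    exact (summable_gauss_int (by norm_num)).mul_left _
  have hbound : ∀ h : ℝ, 1 ≤ h →
      ‖(∑' n : ℤ, rexp (-(h ^ 2 * (n : ℝ) ^ 2) / 2) * Real.cos (x * n)) - 1‖
        ≤ rexp (-h ^ 2 / 2) * C := by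
    intro h hh
    set f : ℤ → ℝ := fun n => rexp (-(h ^ 2 * (n : ℝ) ^ 2) / 2) * Real.cos (x * n) with hf_def
    have hfsumm : Summable f := by
      apply Summable.of_norm
      refine Summable.of_nonneg_of_le (fun n => norm_nonneg _) (fun n => ?_)
        (summable_gauss_int (c := h ^ 2 / 2) (by positivity))
      rw [hf_def]
      simp only [norm_mul, Real.norm_eq_abs, abs_of_pos (Real.exp_pos _)]
      calc rexp (-(h ^ 2 * (n:ℝ) ^ 2) / 2) * |Real.cos (x * n)|
          ≤ rexp (-(h ^ 2 * (n:ℝ) ^ 2) / 2) * 1 :=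
            mul_le_mul_of_nonneg_left (Real.abs_cos_le_one _) (Real.exp_pos _).le
        _ = rexp (-(h ^ 2 / 2) * (n:ℝ) ^ 2) := by rw [mul_one]; congr 1; ring
    have hsplit : (∑' n : ℤ, f n) = f 0 + ∑' n : ℤ, if n = 0 then 0 else f n :=
      Summable.tsum_eq_add_tsum_ite hfsumm 0
    have hf0 : f 0 = 1 := by simp [hf_def]
    have hgsum : Summable fun n : ℤ => rexp (-h ^ 2 / 2) * rexp ((1 - (n:ℝ) ^ 2) / 2) :=
      hCsumm.mul_left _
    have hterm_le : ∀ n : ℤ, ‖if n = 0 then 0 else f n‖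
        ≤ rexp (-h ^ 2 / 2) * rexp ((1 - (n:ℝ) ^ 2) / 2) := by
      intro n
      by_cases hn : n = 0
      · simp [hn]; positivity
      · simp only [hn, if_false, hf_def, norm_mul, Real.norm_eq_abs,
          abs_of_pos (Real.exp_pos _)]
        have h1 : (1 : ℝ) ≤ (n : ℝ) ^ 2 := by
          have h2 : (1 : ℤ) ≤ |n| := Int.one_le_abs hn
          have h3 : (1 : ℤ) ≤ n ^ 2 := by nlinarith [sq_abs n]
          exact_mod_cast h3
        calc rexp (-(h ^ 2 * (n:ℝ) ^ 2) / 2) * |Real.cos (x * n)|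
            ≤ rexp (-(h ^ 2 * (n:ℝ) ^ 2) / 2) * 1 :=
              mul_le_mul_of_nonneg_left (Real.abs_cos_le_one _) (Real.exp_pos _).le
          _ = rexp (-(h ^ 2 * (n:ℝ) ^ 2) / 2) := mul_one _
          _ ≤ rexp (-h ^ 2 / 2) * rexp ((1 - (n:ℝ) ^ 2) / 2) := by
              rw [← Real.exp_add]
              apply Real.exp_le_exp.2
              nlinarith [mul_nonneg (by nlinarith : (0:ℝ) ≤ h ^ 2 - 1)
                (by linarith : (0:ℝ) ≤ (n:ℝ) ^ 2 - 1)]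
    have hitesumm : Summable fun n : ℤ => ‖if n = 0 then 0 else f n‖ :=
      Summable.of_nonneg_of_le (fun n => norm_nonneg _) hterm_le hgsum
    calc ‖(∑' n : ℤ, f n) - 1‖ = ‖∑' n : ℤ, if n = 0 then 0 else f n‖ := by
          rw [hsplit, hf0, add_sub_cancel_left]
      _ ≤ ∑' n : ℤ, ‖if n = 0 then 0 else f n‖ := norm_tsum_le_tsum_norm hitesumm
      _ ≤ ∑' n : ℤ, rexp (-h ^ 2 / 2) * rexp ((1 - (n:ℝ) ^ 2) / 2) :=
          Summable.tsum_le_tsum hterm_le hitesumm hgsum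
      _ = rexp (-h ^ 2 / 2) * C := by rw [tsum_mul_left, hC_def]
  have hzero : Tendsto (fun h : ℝ => rexp (-h ^ 2 / 2) * C) atTop (nhds 0) := by
    rw [show (0:ℝ) = 0 * C by ring]
    apply Tendsto.mul_const
    apply Real.tendsto_exp_atBot.comp
    have h1 : Tendsto (fun k : ℝ => k ^ 2 / 2) atTop atTop :=
      (tendsto_pow_atTop two_ne_zero).atTop_div_const (by norm_num)
    exact (tendsto_neg_atTop_atBot.comp h1).congr (fun k => by simp [neg_div])
  have := squeeze_zero_norm' (Eventually.mono (eventually_ge_atTop (1:ℝ)) hbound) hzero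
  have h2 := this.add_const 1
  simpa using h2

lemma kernel_tendsto (x : ℝ) :
    Tendsto (fun h : ℝ => wrappedNormalKernel h x) atTop (nhds ((2 * π)⁻¹)) := by
  have h1 : Tendsto (fun h : ℝ =>
      (2 * π)⁻¹ * ∑' n : ℤ, rexp (-(h ^ 2 * (n : ℝ) ^ 2) / 2) * Real.cos (x * n))
      atTop (nhds ((2 * π)⁻¹)) := by
    have := (S_tendsto x).const_mul ((2 * π)⁻¹)
    simpa using this
  apply h1.congr'
  filter_upwards [eventually_gt_atTop (0:ℝ)] with h hh
  exact (kernel_eq hh x).symm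

lemma loo_tendsto {n : ℕ} (hn : 2 ≤ n) (X : Fin n → ℝ) (i : Fin n) :
    Tendsto (fun h : ℝ => looEstimator X i h (X i)) atTop (nhds ((2 * π)⁻¹)) := by
  have hsum : Tendsto (fun h : ℝ => ∑ m ∈ Finset.univ.erase i, wrappedNormalKernel h (X i - X m))
      atTop (nhds (∑ m ∈ Finset.univ.erase i, (2 * π)⁻¹)) :=
    tendsto_finset_sum _ (fun m _ => kernel_tendsto (X i - X m))
  have hcard : ((Finset.univ.erase i).card : ℝ) = (n : ℝ) - 1 := by
    rw [Finset.card_erase_of_mem (Finset.mem_univ i), Finset.card_univ, Fintype.card_fin]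
    have : 1 ≤ n := by omega
    push_cast [Nat.cast_sub this]
    ring
  have hne : ((n : ℝ) - 1) ≠ 0 := by
    have : (2 : ℝ) ≤ (n : ℝ) := by exact_mod_cast hn
    linarith
  have := hsum.const_mul (((n : ℝ) - 1)⁻¹)
  simp only [Finset.sum_const, nsmul_eq_mul, hcard] at this
  have heq : ((n : ℝ) - 1)⁻¹ * (((n : ℝ) - 1) * (2 * π)⁻¹) = (2 * π)⁻¹ := by
    field_simp
  rw [heq] at this
  exact this.congr (fun h => by rw [looEstimator])


/-- For any sample `x₁, …, xₙ ∈ (0, 2π]` with `n ≥ 2`,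
`ℒ_CV(h) → (2π)^{−n}` as `h → +∞`. -/
theorem tendsto_pseudoLikelihoodCV_atTop
    {n : ℕ} (hn : 2 ≤ n) (X : Fin n → ℝ) (hX : ∀ i, X i ∈ Set.Ioc (0 : ℝ) (2 * π)) :
    Tendsto (pseudoLikelihoodCV X) atTop (nhds (((2 * π) ^ n)⁻¹)) := by
  have hprod : Tendsto (fun h : ℝ => ∏ i : Fin n, looEstimator X i h (X i))
      atTop (nhds (∏ _i : Fin n, (2 * π)⁻¹)) :=
    tendsto_finset_prod _ (fun i _ => loo_tendsto hn X i)
  have : (∏ _i : Fin n, (2 * π)⁻¹ : ℝ) = ((2 * π) ^ n)⁻¹ := by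
    rw [Finset.prod_const, Finset.card_univ, Fintype.card_fin, inv_pow]
  rw [this] at hprod
  exact hprod.congr (fun h => by rw [pseudoLikelihoodCV])
end

section
/- (Deterministic core of Proposition 1.) Let x₁, …, xₙ ∈ (0, 2π] with n ≥ 2 be pairwise distinct (x_i ≠ x_m for all i ≠ m). Then the cross-validation pseudo-likelihood ℒ_CV, based on the wrapped normal kernel, is bounded above on (0, +∞): there exists a real number M such that ℒ_CV(h) ≤ M for all h > 0. -/
open Real

lemma wrappedNormalKernel_nonneg (h x : ℝ) : 0 ≤ wrappedNormalKernel h x := by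
  unfold wrappedNormalKernel
  exact mul_nonneg (inv_nonneg.2 (Real.sqrt_nonneg _))
    (tsum_nonneg fun m => (Real.exp_pos _).le)

lemma kernel_le {h x δ : ℝ} (hh : 0 < h) (hδ : 0 < δ) (hδπ : δ ≤ π)
    (h1 : δ ≤ |x|) (h2 : δ ≤ 2 * π - |x|) :
    wrappedNormalKernel h x ≤ 6 / δ + 2 := by
  have hπ : (3:ℝ) < π := Real.pi_gt_three
  set r : ℝ := Real.exp (-π / h) with hrdef
  set c : ℝ := Real.exp (-δ / h) with hcdef
  have hr0 : (0:ℝ) < r := Real.exp_pos _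
  have hr1 : r < 1 := by
    rw [hrdef, Real.exp_lt_one_iff]
    exact div_neg_of_neg_of_pos (by linarith) hh
  have hc0 : (0:ℝ) < c := Real.exp_pos _
  have hc1 : c ≤ 1 := by
    rw [hcdef, Real.exp_le_one_iff]
    exact (div_neg_of_neg_of_pos (by linarith) hh).le
  -- per-term bound
  have key : ∀ m : ℤ, Real.exp (-(x + 2 * π * m) ^ 2 / (2 * h ^ 2))
      ≤ 2 * (c * r ^ (m.natAbs - 1)) := by
    intro m
    set t : ℝ := x + 2 * π * m with htdef
    -- |t| is at least δ + π * (natAbs m - 1)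
    have hmabs : ((m.natAbs : ℕ) : ℝ) = |(m : ℝ)| := by
      rw [Nat.cast_natAbs, Int.cast_abs]
    have htri : 2 * π * |(m:ℝ)| - |x| ≤ |t| := by
      have h3 : |(2 * π * m : ℝ)| ≤ |t| + |x| := by
        calc |(2 * π * m : ℝ)| = |t + (-x)| := by rw [htdef]; ring_nf
          _ ≤ |t| + |(-x)| := abs_add_le _ _
          _ = |t| + |x| := by rw [abs_neg]
      have h4 : |(2 * π * m : ℝ)| = 2 * π * |(m:ℝ)| := by
        rw [abs_mul, abs_of_pos Real.two_pi_pos]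
      linarith
    have habs : δ + π * ((m.natAbs - 1 : ℕ) : ℝ) ≤ |t| := by
      rcases Nat.lt_or_ge m.natAbs 2 with hk | hk
      · have hk1 : (m.natAbs - 1 : ℕ) = 0 := by omega
        rw [hk1]
        simp only [Nat.cast_zero, mul_zero, add_zero]
        rcases (by omega : m.natAbs = 0 ∨ m.natAbs = 1) with h0 | h0
        · have hm0 : m = 0 := Int.natAbs_eq_zero.mp h0
          rw [htdef, hm0]
          simpa using h1
        · have : |(m:ℝ)| = 1 := by rw [← hmabs, h0]; norm_num
          rw [this] at htri
          linarith
      · have hk2 : (2:ℝ) ≤ ((m.natAbs:ℕ):ℝ) := by exact_mod_cast hk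
        have hcast : ((m.natAbs - 1 : ℕ) : ℝ) = ((m.natAbs:ℕ):ℝ) - 1 := by
          rw [Nat.cast_sub (by omega : 1 ≤ m.natAbs)]; norm_num
        rw [hcast, hmabs] at *
        have hpk : π * 2 ≤ π * |(m:ℝ)| := by
          apply mul_le_mul_of_nonneg_left _ Real.pi_pos.le
          linarith
        linarith
    -- Gaussian tail vs exponential bound
    have e1 : -t ^ 2 / (2 * h ^ 2) ≤ 1 / 2 - |t| / h := by
      have hexp : (|t| - h) ^ 2 / (2 * h ^ 2) = 1 / 2 - |t| / h + t ^ 2 / (2 * h ^ 2) := by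
        rw [sub_sq, sq_abs]
        field_simp
        ring
      have hge : 0 ≤ (|t| - h) ^ 2 / (2 * h ^ 2) := by positivity
      rw [hexp] at hge
      have hneg : -t ^ 2 / (2 * h ^ 2) = -(t ^ 2 / (2 * h ^ 2)) := by ring
      rw [hneg]
      linarith
    have e3 : Real.exp (-t ^ 2 / (2 * h ^ 2))
        ≤ Real.exp (1/2) * (c * r ^ (m.natAbs - 1)) := by
      have heq : Real.exp (1/2) * (c * r ^ (m.natAbs - 1))
          = Real.exp (1/2 - (δ + π * ((m.natAbs - 1 : ℕ) : ℝ)) / h) := by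
        rw [hcdef, hrdef, ← Real.exp_nat_mul, ← Real.exp_add, ← Real.exp_add]
        congr 1
        field_simp
        ring
      rw [heq]
      apply Real.exp_le_exp.mpr
      have e2 : (δ + π * ((m.natAbs - 1 : ℕ) : ℝ)) / h ≤ |t| / h := by gcongr
      linarith
    have e4 : Real.exp (1/2:ℝ) ≤ 2 := by
      have hsq : Real.exp (1/2:ℝ) * Real.exp (1/2:ℝ) = Real.exp 1 := by
        rw [← Real.exp_add]; norm_num
      nlinarith [Real.exp_one_lt_d9, Real.exp_pos (1/2:ℝ)]
    calc Real.exp (-t ^ 2 / (2 * h ^ 2)) ≤ Real.exp (1/2) * (c * r ^ (m.natAbs - 1)) := e3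
      _ ≤ 2 * (c * r ^ (m.natAbs - 1)) := by
          apply mul_le_mul_of_nonneg_right e4
          positivity
  -- sum of the geometric majorant
  have hpos : HasSum (fun n : ℕ => r ^ (n - 1)) ((1 - r)⁻¹ + 1) := by
    have hgeo : HasSum (fun n : ℕ => r ^ n) ((1 - r)⁻¹) :=
      hasSum_geometric_of_lt_one hr0.le hr1
    apply (hasSum_nat_add_iff' (f := fun n : ℕ => r ^ (n - 1)) 1).mp
    simpa using hgeo
  have hneg : HasSum (fun n : ℕ => r ^ ((-(n + 1) : ℤ).natAbs - 1)) ((1 - r)⁻¹) := by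
    have hgeo : HasSum (fun n : ℕ => r ^ n) ((1 - r)⁻¹) :=
      hasSum_geometric_of_lt_one hr0.le hr1
    have hxx : ∀ n : ℕ, ((-(n + 1) : ℤ).natAbs - 1) = n := by
      intro n; omega
    simp only [hxx]
    exact hgeo
  have hg : HasSum (fun m : ℤ => 2 * (c * r ^ (m.natAbs - 1)))
      (2 * (c * ((1 - r)⁻¹ + 1 + (1 - r)⁻¹))) := by
    have h0 : HasSum (fun m : ℤ => r ^ (m.natAbs - 1)) ((1 - r)⁻¹ + 1 + (1 - r)⁻¹) := by
      apply HasSum.of_nat_of_neg_add_one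
      · simpa using hpos
      · simpa using hneg
    have := (h0.mul_left c).mul_left 2
    simpa [mul_assoc] using this
  -- bound the tsum
  have hf : Summable fun m : ℤ => Real.exp (-(x + 2 * π * m) ^ 2 / (2 * h ^ 2)) :=
    Summable.of_nonneg_of_le (fun m => (Real.exp_pos _).le) key hg.summable
  have hts : (∑' m : ℤ, Real.exp (-(x + 2 * π * m) ^ 2 / (2 * h ^ 2)))
      ≤ 2 * (c * ((1 - r)⁻¹ + 1 + (1 - r)⁻¹)) := by
    rw [← hg.tsum_eq]
    exact Summable.tsum_le_tsum key hf hg.summable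
  -- bound the normalizing factor
  have hsq : (Real.sqrt (2 * π * h ^ 2))⁻¹ ≤ h⁻¹ := by
    apply inv_anti₀ hh
    calc h = Real.sqrt (h ^ 2) := by rw [Real.sqrt_sq hh.le]
      _ ≤ Real.sqrt (2 * π * h ^ 2) := by
          apply Real.sqrt_le_sqrt
          nlinarith [Real.pi_pos, sq_nonneg h]
  -- put everything together
  have hts0 : 0 ≤ ∑' m : ℤ, Real.exp (-(x + 2 * π * m) ^ 2 / (2 * h ^ 2)) :=
    tsum_nonneg fun m => (Real.exp_pos _).le
  have hfinal : wrappedNormalKernel h x ≤ h⁻¹ * (2 * (c * ((1 - r)⁻¹ + 1 + (1 - r)⁻¹))) := by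
    unfold wrappedNormalKernel
    apply mul_le_mul hsq hts hts0 (by positivity)
  -- arithmetic estimates
  have hA0 : 0 < 1 - r := by linarith
  have hch : c * h⁻¹ ≤ δ⁻¹ := by
    have h4 : δ / h ≤ Real.exp (δ / h) := by linarith [Real.add_one_le_exp (δ / h)]
    have h5 : c ≤ (δ / h)⁻¹ := by
      rw [hcdef, show -δ / h = -(δ / h) by ring, Real.exp_neg]
      exact inv_anti₀ (div_pos hδ hh) h4
    calc c * h⁻¹ ≤ (δ / h)⁻¹ * h⁻¹ := by
          apply mul_le_mul_of_nonneg_right h5 (by positivity)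
      _ = δ⁻¹ := by field_simp
  have hAle : (1 - r)⁻¹ ≤ 1 + h / π := by
    have hs0 : 0 < π / h := by positivity
    have h6 : r ≤ (1 + π / h)⁻¹ := by
      rw [hrdef, show -π / h = -(π / h) by ring, Real.exp_neg]
      exact inv_anti₀ (by linarith) (by linarith [Real.add_one_le_exp (π / h)])
    have h7 : (π / h) / (1 + π / h) ≤ 1 - r := by
      have : (π / h) / (1 + π / h) = 1 - (1 + π / h)⁻¹ := by
        field_simp
        ring
      rw [this]; linarith
    have h8 : (1 - r)⁻¹ ≤ ((π / h) / (1 + π / h))⁻¹ :=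
      inv_anti₀ (by positivity) h7
    have h9 : ((π / h) / (1 + π / h))⁻¹ = 1 + h / π := by
      rw [inv_div]
      field_simp
      ring
    linarith
  have harr : h⁻¹ * (2 * (c * ((1 - r)⁻¹ + 1 + (1 - r)⁻¹))) ≤ 6 / δ + 2 := by
    have hexp0 : h⁻¹ * (2 * (c * ((1 - r)⁻¹ + 1 + (1 - r)⁻¹)))
        = 2 * (c * h⁻¹) + 4 * ((c * h⁻¹) * (1 - r)⁻¹) := by ring
    have hstep : (c * h⁻¹) * (1 - r)⁻¹ ≤ (c * h⁻¹) * (1 + h / π) := by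
      apply mul_le_mul_of_nonneg_left hAle (by positivity)
    have hstep2 : (c * h⁻¹) * (1 + h / π) = c * h⁻¹ + c * (h⁻¹ * h) / π := by ring
    have hinvh : h⁻¹ * h = 1 := inv_mul_cancel₀ hh.ne'
    have hc' : c / π ≤ 1 / π := by gcongr
    have hstep3 : (c * h⁻¹) * (1 + h / π) ≤ δ⁻¹ + 1 / π := by
      calc (c * h⁻¹) * (1 + h / π) = c * h⁻¹ + c * (h⁻¹ * h) / π := by ring
        _ = c * h⁻¹ + c / π := by rw [hinvh]; ring
        _ ≤ δ⁻¹ + 1 / π := add_le_add hch hc'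
    have hfrac : (c * h⁻¹) * (1 - r)⁻¹ ≤ δ⁻¹ + 1 / π := le_trans hstep hstep3
    have hpi2 : 1 / π ≤ 1 / 2 := by
      rw [div_le_div_iff₀ Real.pi_pos (by norm_num)]
      linarith
    have hd : δ⁻¹ = 1 / δ := (one_div δ).symm
    rw [hexp0, div_eq_mul_inv 6 δ]
    linarith
  linarith [hfinal, harr]

/-- Deterministic core of Proposition 1: if `x₁, …, xₙ ∈ (0, 2π]` (`n ≥ 2`) are pairwise
distinct, then `ℒ_CV` is bounded above on `(0, +∞)`. -/
theorem pseudoLikelihoodCV_boundedAbove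
    {n : ℕ} (hn : 2 ≤ n) (X : Fin n → ℝ) (hX : ∀ i, X i ∈ Set.Ioc (0 : ℝ) (2 * π))
    (hdist : ∀ i m : Fin n, i ≠ m → X i ≠ X m) :
    ∃ M : ℝ, ∀ h : ℝ, 0 < h → pseudoLikelihoodCV X h ≤ M := by
  have hπ : (3:ℝ) < π := Real.pi_gt_three
  have hne : (Finset.univ.offDiag : Finset (Fin n × Fin n)).Nonempty := by
    refine ⟨(⟨0, by omega⟩, ⟨1, by omega⟩), ?_⟩
    rw [Finset.mem_offDiag]
    refine ⟨Finset.mem_univ _, Finset.mem_univ _, ?_⟩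
    intro hcontra
    have := congrArg Fin.val hcontra
    simp at this
  set δ : ℝ := Finset.inf' _ hne
    (fun p : Fin n × Fin n => min |X p.1 - X p.2| (2 * π - |X p.1 - X p.2|)) with hδdef
  have habs_lt : ∀ p : Fin n × Fin n, p.1 ≠ p.2 →
      0 < min |X p.1 - X p.2| (2 * π - |X p.1 - X p.2|) := by
    intro p hp
    have h1 : 0 < |X p.1 - X p.2| :=
      abs_pos.mpr (sub_ne_zero.mpr (hdist _ _ hp))
    have h2 : |X p.1 - X p.2| < 2 * π := by
      obtain ⟨ha1, ha2⟩ := hX p.1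
      obtain ⟨hb1, hb2⟩ := hX p.2
      rw [abs_sub_lt_iff]
      constructor <;> linarith
    exact lt_min h1 (by linarith)
  have hδpos : 0 < δ := by
    rw [hδdef, Finset.lt_inf'_iff]
    intro p hp
    exact habs_lt p (Finset.mem_offDiag.mp hp).2.2
  have hδπ : δ ≤ π := by
    obtain ⟨p, hp⟩ := hne
    refine le_trans (Finset.inf'_le _ hp) ?_
    rcases le_total |X p.1 - X p.2| π with hc | hc
    · exact le_trans (min_le_left _ _) hc
    · exact le_trans (min_le_right _ _) (by linarith)
  refine ⟨(6 / δ + 2) ^ n, fun h hh => ?_⟩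
  have hC0 : (0:ℝ) ≤ 6 / δ + 2 := by positivity
  have hn2 : (2:ℝ) ≤ (n:ℝ) := by exact_mod_cast hn
  have hnpos : (0:ℝ) < (n:ℝ) - 1 := by linarith
  unfold pseudoLikelihoodCV
  calc ∏ i, looEstimator X i h (X i) ≤ ∏ _i : Fin n, (6 / δ + 2) := ?_
    _ = (6 / δ + 2) ^ n := by rw [Finset.prod_const, Finset.card_univ, Fintype.card_fin]
  apply Finset.prod_le_prod
  · intro i _
    unfold looEstimator
    exact mul_nonneg (inv_nonneg.2 (by linarith))
      (Finset.sum_nonneg fun m _ => wrappedNormalKernel_nonneg _ _)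
  · intro i _
    unfold looEstimator
    have hcard : (Finset.univ.erase i).card = n - 1 := by
      rw [Finset.card_erase_of_mem (Finset.mem_univ i), Finset.card_univ, Fintype.card_fin]
    have hsum : ∑ m ∈ Finset.univ.erase i, wrappedNormalKernel h (X i - X m)
        ≤ ((n:ℝ) - 1) * (6 / δ + 2) := by
      calc ∑ m ∈ Finset.univ.erase i, wrappedNormalKernel h (X i - X m)
          ≤ ∑ _m ∈ Finset.univ.erase i, (6 / δ + 2) := by
            apply Finset.sum_le_sum
            intro m hm
            have hmi : m ≠ i := Finset.ne_of_mem_erase hm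
            have hmem : (i, m) ∈ (Finset.univ.offDiag : Finset (Fin n × Fin n)) :=
              Finset.mem_offDiag.mpr ⟨Finset.mem_univ _, Finset.mem_univ _, hmi.symm⟩
            have hδle := Finset.inf'_le
              (fun p : Fin n × Fin n => min |X p.1 - X p.2| (2 * π - |X p.1 - X p.2|)) hmem
            rw [← hδdef] at hδle
            obtain ⟨hle1, hle2⟩ := le_min_iff.mp hδle
            exact kernel_le hh hδpos hδπ hle1 hle2
        _ = ((n:ℝ) - 1) * (6 / δ + 2) := by
            rw [Finset.sum_const, hcard, nsmul_eq_mul]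
            congr 1
            rw [Nat.cast_sub (by omega : 1 ≤ n)]
            norm_num
    calc ((n:ℝ) - 1)⁻¹ * ∑ m ∈ Finset.univ.erase i, wrappedNormalKernel h (X i - X m)
        ≤ ((n:ℝ) - 1)⁻¹ * (((n:ℝ) - 1) * (6 / δ + 2)) :=
          mul_le_mul_of_nonneg_left hsum (inv_nonneg.2 hnpos.le)
      _ = 6 / δ + 2 := by field_simp
end

section
/- For every h > 0 and every x ∈ ℝ, the wrapped normal kernel is strictly positive: 𝒦_h(x) > 0; moreover 𝒦_h(x) ≤ 𝒦_h(0) for all x ∈ [−π, π]. -/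
open Real

lemma summable_wrapped (h x : ℝ) (hh : 0 < h) :
    Summable fun m : ℤ => Real.exp (-(x + 2 * π * m) ^ 2 / (2 * h ^ 2)) := by
  have hT : (0:ℝ) < 2 * π / h ^ 2 := by positivity
  have hb := summable_pow_mul_jacobiTheta₂_term_bound (|x| / h ^ 2) hT 0
  simp only [pow_zero, one_mul] at hb
  refine hb.of_nonneg_of_le (fun n => (Real.exp_pos _).le) (fun n => ?_)
  rw [Real.exp_le_exp]
  rw [div_le_iff₀ (by positivity : (0:ℝ) < 2 * h ^ 2)]
  have h1 : x * (n:ℝ) ≥ -(|x| * |(n:ℝ)|) := by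
    rw [← abs_mul]; exact neg_abs_le _
  have h2 : (0:ℝ) < h ^ 2 := by positivity
  have h3 : ((|n| : ℤ) : ℝ) = |(n:ℝ)| := by push_cast; ring
  rw [h3]
  have key : -π * (2 * π / h ^ 2 * (n:ℝ) ^ 2 - 2 * (|x| / h ^ 2) * |(n:ℝ)|) * (2 * h ^ 2)
      = -4*π^2*(n:ℝ)^2 + 4*π*(abs x * abs (n:ℝ)) := by
    field_simp; ring
  rw [key]
  nlinarith [sq_nonneg x, Real.pi_pos, h1, mul_le_mul_of_nonneg_left h1 (le_of_lt (by positivity : (0:ℝ) < 4*π))]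

lemma summable_gauss (h : ℝ) (hh : 0 < h) :
    Summable fun n : ℤ => Real.exp (-(h ^ 2 / 2) * n ^ 2) := by
  have hT : (0:ℝ) < h ^ 2 / (2 * π) := by positivity
  have hb := summable_pow_mul_jacobiTheta₂_term_bound 0 hT 0
  simp only [pow_zero, one_mul, mul_zero, zero_mul, sub_zero] at hb
  refine hb.congr fun n => ?_
  congr 1
  have : π ≠ 0 := Real.pi_ne_zero
  field_simp

lemma key_identity (h x : ℝ) (hh : 0 < h) :
    (∑' m : ℤ, Real.exp (-(x + 2 * π * m) ^ 2 / (2 * h ^ 2))) =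
      Real.sqrt (h ^ 2 / (2 * π)) *
        ∑' n : ℤ, Real.exp (-(h ^ 2 / 2) * n ^ 2) * Real.cos (x * n) := by
  have hπ := Real.pi_pos
  set a : ℝ := h ^ 2 / (2 * π) with ha_def
  have ha : 0 < a := by positivity
  have haC : (0:ℝ) < (a : ℂ).re := by simpa using ha
  have H := Complex.tsum_exp_neg_quadratic haC (-Complex.I * ((x : ℂ) / (2 * π)))
  -- rewrite RHS inner terms as real exponentials
  have hR : ∀ n : ℤ, Complex.exp (-(π:ℂ) / (a:ℂ) * ((n:ℂ) + Complex.I * (-Complex.I * ((x:ℂ) / (2 * π)))) ^ 2)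
      = ((Real.exp (-(x + 2 * π * n) ^ 2 / (2 * h ^ 2)) : ℝ) : ℂ) := by
    intro n
    rw [Complex.ofReal_exp]
    congr 1
    have hπC : (π:ℂ) ≠ 0 := by exact_mod_cast Real.pi_ne_zero
    have hhC : (h:ℂ) ≠ 0 := by exact_mod_cast hh.ne'
    have haC' : (a:ℂ) = (h:ℂ) ^ 2 / (2 * (π:ℂ)) := by
      rw [ha_def]; push_cast; ring
    rw [haC']
    push_cast
    field_simp
    ring_nf
    simp [Complex.I_pow_four]
  -- rewrite LHS inner terms
  have hL : ∀ n : ℤ, Complex.exp (-(π:ℂ) * (a:ℂ) * (n:ℂ) ^ 2 + 2 * (π:ℂ) * (-Complex.I * ((x:ℂ) / (2 * π))) * (n:ℂ))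
      = ((Real.exp (-(h ^ 2 / 2) * n ^ 2) : ℝ) : ℂ) * Complex.exp ((-(x * n) : ℝ) * Complex.I) := by
    intro n
    rw [Complex.ofReal_exp, ← Complex.exp_add]
    congr 1
    have hπC : (π:ℂ) ≠ 0 := by exact_mod_cast Real.pi_ne_zero
    have haC' : (a:ℂ) = (h:ℂ) ^ 2 / (2 * (π:ℂ)) := by
      rw [ha_def]; push_cast; ring
    rw [haC']
    push_cast
    field_simp
  simp only [hL, hR] at H
  -- identify the power with the real sqrt
  have hcpow : (1:ℂ) / (a:ℂ) ^ (1/2 : ℂ) = ((Real.sqrt a)⁻¹ : ℝ) := by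
    rw [Real.sqrt_eq_rpow, Complex.ofReal_inv, Complex.ofReal_cpow ha.le]
    push_cast
    rw [one_div]
  rw [hcpow, ← Complex.ofReal_tsum] at H
  -- take real parts
  have hsum : Summable fun n : ℤ =>
      ((Real.exp (-(h ^ 2 / 2) * n ^ 2) : ℝ) : ℂ) * Complex.exp ((-(x * n) : ℝ) * Complex.I) := by
    apply Summable.of_norm
    refine (summable_gauss h hh).congr fun n => ?_
    rw [norm_mul, Complex.norm_exp_ofReal_mul_I, mul_one, Complex.norm_real,
      Real.norm_eq_abs, abs_of_pos (Real.exp_pos _)]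
  have Hre := congrArg Complex.re H
  rw [Complex.re_tsum hsum] at Hre
  simp only [Complex.mul_re, Complex.ofReal_re, Complex.ofReal_im, zero_mul, sub_zero,
    Complex.exp_ofReal_mul_I_re, Real.cos_neg] at Hre
  -- Hre : ∑' n, exp(..) * cos (x*n) = (sqrt a)⁻¹ * S(x)
  have hsqrt : 0 < Real.sqrt a := Real.sqrt_pos.mpr ha
  rw [Hre]
  rw [← mul_assoc, mul_inv_cancel₀ hsqrt.ne', one_mul]

/-- For every `h > 0`, the wrapped normal kernel is strictly positive everywhere;
moreover `𝒦_h(x) ≤ 𝒦_h(0)` for all `x ∈ [−π, π]`. -/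
theorem wrappedNormalKernel_pos_and_le_center (h : ℝ) (hh : 0 < h) :
    (∀ x : ℝ, 0 < wrappedNormalKernel h x) ∧
      (∀ x ∈ Set.Icc (-π) π, wrappedNormalKernel h x ≤ wrappedNormalKernel h 0) := by
  have hπ := Real.pi_pos
  have hc : 0 < (Real.sqrt (2 * π * h ^ 2))⁻¹ := by positivity
  constructor
  · intro x
    unfold wrappedNormalKernel
    exact mul_pos hc
      (Summable.tsum_pos (summable_wrapped h x hh) (fun m => (Real.exp_pos _).le) 0 (Real.exp_pos _))
  · intro x _
    unfold wrappedNormalKernel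
    refine mul_le_mul_of_nonneg_left ?_ hc.le
    rw [key_identity h x hh, key_identity h 0 hh]
    refine mul_le_mul_of_nonneg_left ?_ (Real.sqrt_nonneg _)
    have hsum0 : Summable fun n : ℤ => Real.exp (-(h ^ 2 / 2) * n ^ 2) * Real.cos (0 * n) := by
      refine (summable_gauss h hh).congr fun n => ?_
      simp
    have hsumx : Summable fun n : ℤ => Real.exp (-(h ^ 2 / 2) * n ^ 2) * Real.cos (x * n) := by
      refine Summable.of_norm_bounded (summable_gauss h hh) fun n => ?_
      rw [Real.norm_eq_abs, abs_mul, abs_of_pos (Real.exp_pos _)]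
      exact mul_le_of_le_one_right (Real.exp_pos _).le (abs_cos_le_one _)
    refine Summable.tsum_le_tsum (fun n => ?_) hsumx hsum0
    have h1 : Real.cos (0 * (n:ℝ)) = 1 := by simp
    rw [h1, mul_one]
    exact mul_le_of_le_one_right (Real.exp_pos _).le (Real.cos_le_one _)
end
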